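/- arXiv:1110.6856 — 5 statements merged into one kernel-verified Lean document; each statement's English description precedes it below -/
import Mathlib

section
/- Let A and B be unital complex Banach algebras, A semisimple, and T : A → B a surjective linear spectral isometry. Then B is semisimple. -/
/-- The Jacobson radical of a ring: the Jacobson radical of the zero two-sided ideal. -/
def jacobsonRadical (A : Type*) [Ring A] : TwoSidedIdeal A :=
  TwoSidedIdeal.jacobson (⊥ : TwoSidedIdeal A)

/-!
If `T a` lies in the radical of `B`, then adding it does not change spectra, so
`r (a + x) = r (T a + T x) = r (T x) = r x` for all `x`; by Zemánek's characterisation of the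
radical, `a` is then in the radical of `A`, which is zero.

Zemánek's theorem: if `r (z + x) = r x` for all `x`, then `exp (t c) * z * exp (-t c) - z` is
quasinilpotent for every `t`, hence so is `(exp (t c) * z * exp (-t c) - z) / t` on the unit
circle, and by the maximum principle for the spectral radius (Gelfand's formula, compactness and
the maximum modulus principle applied to powers) so is its value `c * z - z * c` at `t = 0`.
Now let `M` be a maximal left ideal. If `t * z ∉ M` for some `t ∈ M`, then `b * t * z ≡ 1` modulo
`M` for some `b`, and `1` is a spectral value of the commutator of `b * t` and `z`. Otherwise right
multiplication by `z` acts on the simple module `A ⧸ M`, where it is a scalar `α` by Schur's lemma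
and Gelfand–Mazur; then `α` is a spectral value of the quasinilpotent `z`, so `α = 0` and
`z ∈ M`. Thus `z` lies in every maximal left ideal.
-/

open Filter Set Metric Finset
open scoped Topology ENNReal NNReal Pointwise

section Ring

variable {R : Type*} [Ring R]

theorem mem_jacobsonRadical_iff_forall_isMaximal {z : R} :
    z ∈ jacobsonRadical R ↔ ∀ M : Ideal R, M.IsMaximal → z ∈ M := by
  rw [jacobsonRadical, ← TwoSidedIdeal.mem_asIdeal, TwoSidedIdeal.asIdeal_jacobson,
    Ideal.jacobson, Submodule.mem_sInf]
  simp

theorem exists_mul_one_add_eq_one_of_mem_jacobsonRadical {s : R} (hs : s ∈ jacobsonRadical R) :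
    ∃ w, w * (1 + s) = 1 := by
  obtain ⟨w, hw⟩ := TwoSidedIdeal.mem_jacobson_iff.mp hs 1
  rw [TwoSidedIdeal.mem_bot, sub_eq_zero, mul_one] at hw
  exact ⟨w, by rw [mul_add, mul_one, add_comm, hw]⟩

theorem isUnit_one_add_of_mem_jacobsonRadical {s : R} (hs : s ∈ jacobsonRadical R) :
    IsUnit (1 + s) := by
  obtain ⟨w, hw⟩ := exists_mul_one_add_eq_one_of_mem_jacobsonRadical hs
  have hws : -(w * s) ∈ jacobsonRadical R :=
    (jacobsonRadical R).neg_mem ((jacobsonRadical R).mul_mem_left w s hs)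
  obtain ⟨w', hw'⟩ := exists_mul_one_add_eq_one_of_mem_jacobsonRadical hws
  rw [show 1 + -(w * s) = w by rw [← hw]; noncomm_ring] at hw'
  obtain rfl : w' = 1 + s := left_inv_eq_right_inv hw' hw
  exact ⟨⟨1 + s, w, hw', hw⟩, rfl⟩

theorem IsUnit.add_mem_jacobsonRadical {u s : R} (hu : IsUnit u) (hs : s ∈ jacobsonRadical R) :
    IsUnit (u + s) := by
  obtain ⟨u, rfl⟩ := hu
  rw [show (u : R) + s = u * (1 + ↑u⁻¹ * s) by rw [mul_add, mul_one, Units.mul_inv_cancel_left]]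
  exact u.isUnit.mul
    (isUnit_one_add_of_mem_jacobsonRadical ((jacobsonRadical R).mul_mem_left _ _ hs))

variable {𝕜 : Type*} [CommSemiring 𝕜] [Algebra 𝕜 R]

theorem spectrum_add_of_mem_jacobsonRadical {s : R} (hs : s ∈ jacobsonRadical R) (x : R) :
    spectrum 𝕜 (s + x) = spectrum 𝕜 x := by
  have key : ∀ t ∈ jacobsonRadical R, ∀ y : R, spectrum 𝕜 (t + y) ⊆ spectrum 𝕜 y := by
    intro t ht y μ hμ hu
    refine hμ ?_
    rw [spectrum.mem_resolventSet_iff] at hu ⊢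
    rw [sub_add_eq_sub_sub_swap, sub_eq_add_neg]
    exact hu.add_mem_jacobsonRadical ((jacobsonRadical R).neg_mem ht)
  refine (key s hs x).antisymm ?_
  simpa using key (-s) ((jacobsonRadical R).neg_mem hs) (s + x)

theorem Ideal.mem_spectrum_of_algebraMap_sub_mem {M : Ideal R} (hM : M ≠ ⊤) {a : R} {μ : 𝕜}
    (h : algebraMap 𝕜 R μ - a ∈ M) : μ ∈ spectrum 𝕜 a :=
  fun hu => hM (M.eq_top_of_isUnit_mem h hu)

end Ring

theorem norm_pow_le_sum_mul_pow {A : Type*} [NormedRing A] (a : A) {N : ℕ} (hN : 0 < N) {ε : ℝ}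
    (hε : 0 < ε) (ha : ‖a ^ N‖ ≤ ε ^ N) (n : ℕ) :
    ‖a ^ n‖ ≤ (∑ r ∈ range N, ‖a ^ r‖ / ε ^ r) * ε ^ n := by
  have hq : ∀ q r, ‖a ^ (N * q + r)‖ ≤ ε ^ (N * q) * ‖a ^ r‖ := by
    intro q r
    induction q with
    | zero => simp
    | succ q ih =>
      calc ‖a ^ (N * (q + 1) + r)‖ = ‖a ^ N * a ^ (N * q + r)‖ := by rw [← pow_add]; ring_nf
      _ ≤ ε ^ N * (ε ^ (N * q) * ‖a ^ r‖) := norm_mul_le_of_le ha ih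
      _ = ε ^ (N * (q + 1)) * ‖a ^ r‖ := by ring
  obtain ⟨q, r, hr, rfl⟩ : ∃ q r, r < N ∧ n = N * q + r :=
    ⟨n / N, n % N, Nat.mod_lt n hN, (Nat.div_add_mod n N).symm⟩
  calc ‖a ^ (N * q + r)‖ ≤ ε ^ (N * q) * ‖a ^ r‖ := hq q r
  _ = ‖a ^ r‖ / ε ^ r * ε ^ (N * q + r) := by rw [pow_add]; field_simp
  _ ≤ (∑ r ∈ range N, ‖a ^ r‖ / ε ^ r) * ε ^ (N * q + r) := by
      gcongr
      exact single_le_sum (f := fun r => ‖a ^ r‖ / ε ^ r) (fun _ _ => by positivity)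
        (mem_range.mpr hr)

section SpectralRadius

variable {𝕜 A : Type*} [NormedField 𝕜] [Ring A] [Algebra 𝕜 A]

theorem spectralRadius_smul (k : 𝕜) (a : A) :
    spectralRadius 𝕜 (k • a) = ‖k‖₊ * spectralRadius 𝕜 a := by
  rcases eq_or_ne k 0 with rfl | hk
  · simp
  have hσ : spectrum 𝕜 (k • a) = k • spectrum 𝕜 a := by
    simpa using spectrum.unit_smul_eq_smul a (Units.mk0 k hk)
  simp_rw [spectralRadius, hσ, ← Set.image_smul, iSup_image, ENNReal.mul_iSup, nnnorm_smul,
    ENNReal.coe_mul]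

theorem eq_zero_of_mem_spectrum_of_spectralRadius_eq_zero {a : A} {μ : 𝕜}
    (hμ : μ ∈ spectrum 𝕜 a) (ha : spectralRadius 𝕜 a = 0) : μ = 0 := by
  have : (‖μ‖₊ : ℝ≥0∞) ≤ spectralRadius 𝕜 a := le_iSup₂ (f := fun k _ => (‖k‖₊ : ℝ≥0∞)) μ hμ
  simpa [ha] using this

theorem spectralRadius_units_conjugate_add {z : A}
    (hz : ∀ x, spectralRadius 𝕜 (z + x) = spectralRadius 𝕜 x) (u : Aˣ) (x : A) :
    spectralRadius 𝕜 (u * z * ↑u⁻¹ + x) = spectralRadius 𝕜 x := by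
  have hconj : ∀ (v : Aˣ) (b : A), spectralRadius 𝕜 (v * b * ↑v⁻¹) = spectralRadius 𝕜 b :=
    fun v b => by rw [spectralRadius, spectrum.units_conjugate, spectralRadius]
  rw [show (u : A) * z * ↑u⁻¹ + x = u * (z + ↑u⁻¹ * x * u) * ↑u⁻¹ by
    simp [mul_add, add_mul, mul_assoc], hconj, hz]
  simpa using hconj u⁻¹ x

theorem spectralRadius_add_of_mem_jacobsonRadical {s : A} (hs : s ∈ jacobsonRadical A) (x : A) :
    spectralRadius 𝕜 (s + x) = spectralRadius 𝕜 x := by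
  rw [spectralRadius, spectrum_add_of_mem_jacobsonRadical hs, spectralRadius]

end SpectralRadius

section BanachAlgebra

variable {A : Type*} [NormedRing A] [NormedAlgebra ℂ A] [CompleteSpace A]

theorem eventually_norm_pow_lt_of_spectralRadius_lt {a : A} {ε : ℝ≥0}
    (ha : spectralRadius ℂ a < ε) : ∀ᶠ n : ℕ in atTop, ‖a ^ n‖ < ε ^ n := by
  have hε : (0 : ℝ) < ε := by
    exact_mod_cast (pos_iff_ne_zero.mpr (ne_bot_of_gt ha) : (0 : ℝ≥0∞) < ε)
  filter_upwards [(spectrum.pow_norm_pow_one_div_tendsto_nhds_spectralRadius a).eventually_lt_const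
    (by simpa using ha), eventually_ne_atTop 0] with n hn hn0
  rw [← ENNReal.ofReal_coe_nnreal, ENNReal.ofReal_lt_ofReal_iff hε, one_div,
    Real.rpow_inv_lt_iff_of_pos (norm_nonneg _) hε.le (by positivity)] at hn
  exact_mod_cast hn

theorem spectralRadius_le_of_norm_pow_le {a : A} {C : ℝ} {ε : ℝ≥0}
    (ha : ∀ n, ‖a ^ n‖ ≤ C * ε ^ n) : spectralRadius ℂ a ≤ ε := by
  set C' := max C 1
  have hC' : 0 < C' := lt_max_of_lt_right one_pos
  have hroot : Tendsto (fun n : ℕ => ENNReal.ofReal (C' ^ (1 / n : ℝ) * ε)) atTop (𝓝 ε) := by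
    have h := ((Real.continuousAt_const_rpow hC'.ne').tendsto.comp
      tendsto_one_div_atTop_nhds_zero_nat).mul_const (ε : ℝ)
    rw [Real.rpow_zero, one_mul] at h
    simpa using ENNReal.tendsto_ofReal h
  refine le_of_tendsto_of_tendsto (spectrum.pow_norm_pow_one_div_tendsto_nhds_spectralRadius a)
    hroot ?_
  filter_upwards [eventually_ne_atTop 0] with n hn
  refine ENNReal.ofReal_le_ofReal ?_
  calc ‖a ^ n‖ ^ (1 / n : ℝ) ≤ (C' * ε ^ n) ^ (1 / n : ℝ) := by
        gcongr
        exact (ha n).trans (by gcongr; exact le_max_left _ _)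
  _ = C' ^ (1 / n : ℝ) * ε := by
        rw [Real.mul_rpow hC'.le (by positivity), one_div,
          Real.pow_rpow_inv_natCast ε.coe_nonneg hn]

theorem IsCompact.exists_norm_pow_le_mul_pow {X : Type*} [TopologicalSpace X] {K : Set X}
    (hK : IsCompact K) {f : X → A} (hf : ContinuousOn f K) {ε : ℝ≥0}
    (hε : ∀ x ∈ K, spectralRadius ℂ (f x) < ε) :
    ∃ C, ∀ x ∈ K, ∀ n, ‖f x ^ n‖ ≤ C * ε ^ n := by
  refine hK.induction_on (p := fun S => ∃ C, ∀ x ∈ S, ∀ n, ‖f x ^ n‖ ≤ C * ε ^ n)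
    ⟨0, by simp⟩ (fun S T hST ⟨C, hC⟩ => ⟨C, fun x hx => hC x (hST hx)⟩)
    (fun S T ⟨C, hC⟩ ⟨D, hD⟩ => ⟨max C D, ?_⟩) (fun x hx => ?_)
  · rintro x (hx | hx) n
    · exact (hC x hx n).trans (by gcongr; exact le_max_left _ _)
    · exact (hD x hx n).trans (by gcongr; exact le_max_right _ _)
  have hε0 : (0 : ℝ) < ε := by
    exact_mod_cast (pos_iff_ne_zero.mpr (ne_bot_of_gt (hε x hx)) : (0 : ℝ≥0∞) < ε)
  obtain ⟨N, hN0, hN⟩ :=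
    ((eventually_gt_atTop 0).and (eventually_norm_pow_lt_of_spectralRadius_lt (hε x hx))).exists
  obtain ⟨C, hC⟩ := hK.exists_bound_of_continuousOn
    (f := fun y => ∑ r ∈ range N, ‖f y ^ r‖ / (ε : ℝ) ^ r) (by fun_prop)
  have hnear : ∀ᶠ y in 𝓝[K] x, ‖f y ^ N‖ < ε ^ N :=
    ((hf x hx).pow N).norm.eventually_lt continuousWithinAt_const hN
  refine ⟨K ∩ {y | ‖f y ^ N‖ < ε ^ N}, inter_mem self_mem_nhdsWithin hnear, C, ?_⟩
  rintro y ⟨hyK, hy⟩ n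
  calc ‖f y ^ n‖ ≤ (∑ r ∈ range N, ‖f y ^ r‖ / (ε : ℝ) ^ r) * ε ^ n :=
        norm_pow_le_sum_mul_pow _ hN0 hε0 hy.le n
  _ ≤ C * ε ^ n := by
        gcongr
        exact (le_abs_self _).trans ((Real.norm_eq_abs _).symm ▸ hC y hyK)

theorem spectralRadius_le_of_forall_mem_frontier {U : Set ℂ} (hU : Bornology.IsBounded U)
    {h : ℂ → A} (hh : DiffContOnCl ℂ h U) {ε : ℝ≥0}
    (hε : ∀ z ∈ frontier U, spectralRadius ℂ (h z) < ε) {w : ℂ} (hw : w ∈ closure U) :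
    spectralRadius ℂ (h w) ≤ ε := by
  have hK : IsCompact (frontier U) := Metric.isCompact_of_isClosed_isBounded isClosed_frontier
    (hU.closure.subset frontier_subset_closure)
  obtain ⟨C, hC⟩ := hK.exists_norm_pow_le_mul_pow (hh.continuousOn.mono frontier_subset_closure) hε
  refine spectralRadius_le_of_norm_pow_le (C := C) fun n => ?_
  have hpow : DiffContOnCl ℂ (fun z => h z ^ n) U :=
    ⟨hh.differentiableOn.pow n, hh.continuousOn.pow n⟩
  exact Complex.norm_le_of_forall_mem_frontier_norm_le hU hpow (fun z hz => hC z hz n) hw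

theorem spectralRadius_deriv_eq_zero {g : ℂ → A} (hg : Differentiable ℂ g) {c : ℂ}
    (hgc : g c = 0) (hq : ∀ z, spectralRadius ℂ (g z) = 0) :
    spectralRadius ℂ (deriv g c) = 0 := by
  have hdslope : Differentiable ℂ (dslope g c) := fun z =>
    ((Complex.differentiableOn_dslope univ_mem).mpr hg.differentiableOn z
      (mem_univ z)).differentiableAt univ_mem
  refine le_antisymm (ENNReal.le_of_forall_pos_le_add fun ε hε _ => ?_) zero_le
  rw [zero_add, ← dslope_same]
  refine spectralRadius_le_of_forall_mem_frontier isBounded_ball hdslope.diffContOnCl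
    (fun z hz => ?_) (subset_closure (mem_ball_self one_pos))
  have hzc : z ≠ c := by
    rintro rfl
    simp [frontier_ball _ one_ne_zero] at hz
  rw [dslope_of_ne g hzc, slope_def_module, hgc, sub_zero, spectralRadius_smul, hq, mul_zero]
  exact_mod_cast hε

theorem spectralRadius_commutator_eq_zero {z : A}
    (hz : ∀ x, spectralRadius ℂ (z + x) = spectralRadius ℂ x) (c : A) :
    spectralRadius ℂ (c * z - z * c) = 0 := by
  set g : ℂ → A := fun t => NormedSpace.exp (t • c) * z * NormedSpace.exp (t • -c) - z
  have hg : ∀ t, HasDerivAt g (NormedSpace.exp (t • c) * c * z * NormedSpace.exp (t • -c) +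
      NormedSpace.exp (t • c) * z * (NormedSpace.exp (t • -c) * -c)) t := fun t =>
    (((hasDerivAt_exp_smul_const c t).mul_const z).mul
      (hasDerivAt_exp_smul_const (-c) t)).sub_const z
  have hunit : ∀ t : ℂ, ∃ u : Aˣ, (u : A) = NormedSpace.exp (t • c) ∧
      (↑u⁻¹ : A) = NormedSpace.exp (t • -c) := fun t => by
    let +nondep : NormedAlgebra ℚ A := .restrictScalars ℚ ℂ A
    have hcomm : Commute (t • c) (t • -c) := ((Commute.refl c).neg_right.smul_left t).smul_right t
    refine ⟨⟨_, _, ?_, ?_⟩, rfl, rfl⟩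
    · rw [← NormedSpace.exp_add_of_commute hcomm, smul_neg, add_neg_cancel, NormedSpace.exp_zero]
    · rw [← NormedSpace.exp_add_of_commute hcomm.symm, smul_neg, neg_add_cancel,
        NormedSpace.exp_zero]
  have hz0 : spectralRadius ℂ z = 0 := by simpa using hz 0
  have hq : ∀ t, spectralRadius ℂ (g t) = 0 := fun t => by
    obtain ⟨u, hu, hu'⟩ := hunit t
    simp only [g, sub_eq_add_neg]
    rw [← hu, ← hu', spectralRadius_units_conjugate_add hz, ← neg_one_smul ℂ z,
      spectralRadius_smul, hz0, mul_zero]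
  convert spectralRadius_deriv_eq_zero (fun t => (hg t).differentiableAt) (c := 0) (by simp [g]) hq
    using 2
  rw [(hg 0).deriv]
  simp only [zero_smul, NormedSpace.exp_zero, one_mul, mul_one, mul_neg]
  noncomm_ring

end BanachAlgebra

theorem LinearMap.exists_eq_smul_of_isSimpleModule {A V : Type*} [Ring A] [Algebra ℂ A]
    [NormedAddCommGroup V] [NormedSpace ℂ V] [CompleteSpace V] [Nontrivial V] [Module A V]
    [IsScalarTower ℂ A V] [IsSimpleModule A V] (d : V →ₗ[A] V) (hd : Continuous d) :
    ∃ α : ℂ, ∀ v, d v = α • v := by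
  let D : V →L[ℂ] V := ⟨d.restrictScalars ℂ, hd⟩
  obtain ⟨α, hα⟩ := spectrum.nonempty D
  refine ⟨α, fun v => ?_⟩
  rcases (α • LinearMap.id - d).bijective_or_eq_zero with hbij | hzero
  · refine absurd (ContinuousLinearMap.isUnit_iff_bijective.mpr ?_) hα
    convert hbij using 1
    ext v
    simp only [Algebra.algebraMap_eq_smul_one, _root_.sub_apply, _root_.smul_apply,
      one_apply_eq_self, LinearMap.sub_apply, LinearMap.smul_apply, LinearMap.id_apply]
    rfl
  · have := LinearMap.congr_fun hzero v
    rw [LinearMap.sub_apply, LinearMap.smul_apply, LinearMap.id_apply, LinearMap.zero_apply,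
      sub_eq_zero] at this
    exact this.symm

section Zemanek

variable {A : Type*} [NormedRing A] [NormedAlgebra ℂ A] [CompleteSpace A]

theorem Ideal.IsMaximal.exists_sub_algebraMap_mem {M : Ideal A} (hM : M.IsMaximal) {z : A}
    (hz : ∀ t ∈ M, t * z ∈ M) : ∃ α : ℂ, z - algebraMap ℂ A α ∈ M := by
  have : IsSimpleModule A (A ⧸ M) := isSimpleModule_iff_isCoatom.mpr hM.out
  have : Nontrivial (A ⧸ M) := Submodule.Quotient.nontrivial_iff.mpr hM.ne_top
  let d := M.mapQ M (LinearMap.mulRight A z) hz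
  have hd : Continuous d := by
    rw [← M.isOpenQuotientMap_mkQ.continuous_comp_iff]
    exact M.isOpenQuotientMap_mkQ.continuous.comp (continuous_mul_const z)
  obtain ⟨α, hα⟩ := d.exists_eq_smul_of_isSimpleModule hd
  refine ⟨α, (Submodule.Quotient.eq M).mp ?_⟩
  have h1 : (Submodule.Quotient.mk z : A ⧸ M) = α • Submodule.Quotient.mk 1 := by
    rw [← hα, ← one_mul z]
    rfl
  rw [h1, Algebra.algebraMap_eq_smul_one, Submodule.Quotient.mk_smul]

theorem mem_jacobsonRadical_of_spectralRadius_commutator_eq_zero {z : A}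
    (hz : spectralRadius ℂ z = 0) (hcomm : ∀ c, spectralRadius ℂ (c * z - z * c) = 0) :
    z ∈ jacobsonRadical A := by
  refine mem_jacobsonRadical_iff_forall_isMaximal.mpr fun M hM => ?_
  by_contra hzM
  by_cases hMz : ∀ t ∈ M, t * z ∈ M
  · obtain ⟨α, hα⟩ := hM.exists_sub_algebraMap_mem hMz
    have hα0 : α = 0 := eq_zero_of_mem_spectrum_of_spectralRadius_eq_zero
      (Ideal.mem_spectrum_of_algebraMap_sub_mem hM.ne_top
        (by rw [← neg_sub]; exact M.neg_mem hα)) hz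
    rw [hα0, map_zero, sub_zero] at hα
    exact hzM hα
  · push Not at hMz
    obtain ⟨t, htM, htz⟩ := hMz
    obtain ⟨b, m, hm, hbm⟩ := hM.exists_inv htz
    have hone : (1 : ℂ) ∈ spectrum ℂ (b * t * z - z * (b * t)) := by
      refine Ideal.mem_spectrum_of_algebraMap_sub_mem hM.ne_top ?_
      rw [show algebraMap ℂ A 1 - (b * t * z - z * (b * t)) = m + z * b * t by
        rw [map_one, ← hbm]; noncomm_ring]
      exact M.add_mem hm (M.mul_mem_left _ htM)
    exact one_ne_zero (eq_zero_of_mem_spectrum_of_spectralRadius_eq_zero hone (hcomm _))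

theorem mem_jacobsonRadical_of_forall_spectralRadius_add_eq {z : A}
    (hz : ∀ x, spectralRadius ℂ (z + x) = spectralRadius ℂ x) : z ∈ jacobsonRadical A :=
  mem_jacobsonRadical_of_spectralRadius_commutator_eq_zero
    (by simpa using hz 0) (spectralRadius_commutator_eq_zero hz)

end Zemanek

theorem semisimple_of_spectral_isometry_general
    {A B : Type*} [NormedRing A] [NormedAlgebra ℂ A] [CompleteSpace A]
    [NormedRing B] [NormedAlgebra ℂ B]
    (hA : jacobsonRadical A = ⊥)
    (T : A →ₗ[ℂ] B) (hsurj : Function.Surjective T)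
    (hspec : ∀ a : A, spectralRadius ℂ (T a) = spectralRadius ℂ a) :
    jacobsonRadical B = ⊥ := by
  refine eq_bot_iff.mpr fun b hb => ?_
  obtain ⟨a, rfl⟩ := hsurj b
  have ha : a ∈ jacobsonRadical A := mem_jacobsonRadical_of_forall_spectralRadius_add_eq fun x => by
    rw [← hspec, ← hspec, map_add, spectralRadius_add_of_mem_jacobsonRadical hb]
  rw [hA, TwoSidedIdeal.mem_bot] at ha
  rw [ha, map_zero]
  exact zero_mem _

/-- If `T : A → B` is a surjective linear spectral isometry between unital complex Banach
algebras and `A` is semisimple, then `B` is semisimple. -/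
theorem semisimple_of_spectral_isometry
    {A B : Type*} [NormedRing A] [NormedAlgebra ℂ A] [CompleteSpace A]
    [NormedRing B] [NormedAlgebra ℂ B] [CompleteSpace B]
    (hA : jacobsonRadical A = ⊥)
    (T : A →ₗ[ℂ] B) (hsurj : Function.Surjective T)
    (hspec : ∀ a : A, spectralRadius ℂ (T a) = spectralRadius ℂ a) :
    jacobsonRadical B = ⊥ :=
  semisimple_of_spectral_isometry_general hA T hsurj hspec
end

section
/- Let A be a unital complex semisimple Banach algebra and B a unital complex Banach algebra, and let T : A → B be a unital surjective linear spectral isometry. If A is commutative then B is commutative. -/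
open NormedSpace WeakDual
open scoped ENNReal

lemma nnnorm_apply_le_spectralRadius {𝕜 A F : Type*} [NormedField 𝕜] [Ring A] [Algebra 𝕜 A]
    [FunLike F A 𝕜] [AlgHomClass F 𝕜 A 𝕜] (φ : F) (a : A) :
    (‖φ a‖₊ : ℝ≥0∞) ≤ spectralRadius 𝕜 a :=
  le_iSup₂ (α := ℝ≥0∞) (φ a) (AlgHom.apply_mem_spectrum φ a)

namespace spectrum

lemma spectralRadius_le_nnnorm_mul_nnnorm_one {𝕜 A : Type*} [NormedField 𝕜] [NormedRing A]
    [NormedAlgebra 𝕜 A] [CompleteSpace A] (a : A) :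
    spectralRadius 𝕜 a ≤ ↑(‖a‖₊ * ‖(1 : A)‖₊) :=
  iSup₂_le fun _ hk => mod_cast norm_le_norm_mul_of_mem hk

lemma exp_mul_mul_exp_neg {R A : Type*} [CommSemiring R] [NormedRing A] [NormedAlgebra ℚ A]
    [CompleteSpace A] [Algebra R A] (x y : A) :
    spectrum R (exp x * y * exp (-x)) = spectrum R y := by
  let := invertibleExp x
  simpa [invOf_exp] using units_conjugate (R := R) (a := y) (u := unitOfInvertible (exp x))

end spectrum

theorem LinearMap.map_mul_comm_of_nnnorm_le_spectralRadius {B : Type*} [NormedRing B]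
    [NormedAlgebra ℂ B] [CompleteSpace B] (φ : B →ₗ[ℂ] ℂ)
    (hφ : ∀ b, (‖φ b‖₊ : ℝ≥0∞) ≤ spectralRadius ℂ b) (x y : B) :
    φ (x * y) = φ (y * x) := by
  -- the lemmas on `exp` are stated for `ℚ`-algebras
  let _ : NormedAlgebra ℚ B := NormedAlgebra.restrictScalars ℚ ℂ B
  have hbound (b : B) : ‖φ b‖₊ ≤ ‖b‖₊ * ‖(1 : B)‖₊ :=
    mod_cast (hφ b).trans (spectrum.spectralRadius_le_nnnorm_mul_nnnorm_one b)
  let ψ : B →L[ℂ] ℂ := φ.mkContinuous ‖(1 : B)‖ fun b => by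
    rw [mul_comm]
    exact_mod_cast hbound b
  let conj : ℂ → B := fun t => exp (t • x) * y * exp (t • -x)
  have hconj (t : ℂ) := ((hasDerivAt_exp_smul_const (𝕂 := ℂ) x t).mul_const y).mul
    (hasDerivAt_exp_smul_const (𝕂 := ℂ) (-x) t)
  have hconj_bounded : Bornology.IsBounded (Set.range fun t => ψ (conj t)) := by
    rw [isBounded_iff_forall_norm_le]
    refine ⟨‖y‖ * ‖(1 : B)‖, ?_⟩
    rintro _ ⟨t, rfl⟩
    have hconj_radius : spectralRadius ℂ (conj t) = spectralRadius ℂ y := by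
      simp only [spectralRadius, conj, smul_neg, spectrum.exp_mul_mul_exp_neg]
    have : ‖φ (conj t)‖₊ ≤ ‖y‖₊ * ‖(1 : B)‖₊ := mod_cast ((hφ (conj t)).trans_eq
      hconj_radius).trans (spectrum.spectralRadius_le_nnnorm_mul_nnnorm_one y)
    exact_mod_cast this
  have hconst (t : ℂ) : ψ (conj t) = ψ (conj 0) :=
    (ψ.differentiable.comp fun t => (hconj t).differentiableAt).apply_eq_apply_of_bounded
      hconj_bounded t 0
  have hderiv := (ψ.hasFDerivAt.comp_hasDerivAt 0 (hconj 0)).unique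
    ((hasDerivAt_const (0 : ℂ) (ψ (conj 0))).congr_of_eventuallyEq (.of_forall hconst))
  rw [← sub_eq_zero, ← map_sub]
  simpa [ψ, sub_eq_add_neg] using hderiv

section Commutative

variable {A : Type*} [NormedCommRing A] [NormedAlgebra ℂ A] [CompleteSpace A]

lemma mem_jacobsonRadical_of_forall_character_eq_zero {a : A}
    (ha : ∀ χ : characterSpace ℂ A, χ a = 0) : a ∈ jacobsonRadical A := by
  rw [jacobsonRadical, ← TwoSidedIdeal.mem_asIdeal, TwoSidedIdeal.asIdeal_jacobson,
    TwoSidedIdeal.bot_asIdeal, Ideal.mem_jacobson_bot]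
  intro z
  by_contra hz
  obtain ⟨χ, hχ⟩ := CharacterSpace.exists_apply_eq_zero hz
  simp [ha χ] at hχ

lemma eq_zero_of_forall_character_eq_zero (hA : jacobsonRadical A = ⊥) {a : A}
    (ha : ∀ χ : characterSpace ℂ A, χ a = 0) : a = 0 := by
  simpa [hA] using mem_jacobsonRadical_of_forall_character_eq_zero ha

lemma eq_zero_of_spectralRadius_eq_zero (hA : jacobsonRadical A = ⊥) {a : A}
    (ha : spectralRadius ℂ a = 0) : a = 0 :=
  eq_zero_of_forall_character_eq_zero hA fun χ => by
    simpa [ha] using nnnorm_apply_le_spectralRadius χ a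

end Commutative

theorem commutative_of_spectral_isometry_general
    {A B : Type*} [NormedRing A] [NormedAlgebra ℂ A] [CompleteSpace A]
    [NormedRing B] [NormedAlgebra ℂ B] [CompleteSpace B]
    (hA : jacobsonRadical A = ⊥)
    (T : A →ₗ[ℂ] B) (hsurj : Function.Surjective T)
    (hspec : ∀ a : A, spectralRadius ℂ (T a) = spectralRadius ℂ a)
    (hcomm : ∀ x y : A, x * y = y * x) :
    ∀ x y : B, x * y = y * x := by
  let _ : NormedCommRing A := { ‹NormedRing A› with mul_comm := hcomm }
  have hinj : Function.Injective T := fun a b hab => sub_eq_zero.mp <|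
    eq_zero_of_spectralRadius_eq_zero hA <| by
      rw [← hspec, map_sub, hab, sub_self, spectrum.spectralRadius_zero]
  let e := LinearEquiv.ofBijective T ⟨hinj, hsurj⟩
  intro x y
  refine e.symm.injective (sub_eq_zero.mp ?_)
  refine eq_zero_of_forall_character_eq_zero hA fun χ => ?_
  rw [map_sub, sub_eq_zero]
  refine ((χ : A →ₗ[ℂ] ℂ) ∘ₗ e.symm.toLinearMap).map_mul_comm_of_nnnorm_le_spectralRadius
    (fun b => ?_) x y
  calc (‖χ (e.symm b)‖₊ : ℝ≥0∞) ≤ spectralRadius ℂ (e.symm b) :=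
        nnnorm_apply_le_spectralRadius χ _
    _ = spectralRadius ℂ b := by
        rw [← hspec]
        exact congrArg _ (e.apply_symm_apply b)

/-- **Lemma 2.2.** If `T` is a unital surjective spectral isometry from a semisimple unital
complex Banach algebra `A` onto a unital complex Banach algebra `B` and `A` is commutative,
then `B` is commutative. -/
theorem commutative_of_spectral_isometry
    {A B : Type*} [NormedRing A] [NormedAlgebra ℂ A] [CompleteSpace A]
    [NormedRing B] [NormedAlgebra ℂ B] [CompleteSpace B]
    (hA : jacobsonRadical A = ⊥)
    (T : A →ₗ[ℂ] B) (hunital : T 1 = 1) (hsurj : Function.Surjective T)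
    (hspec : ∀ a : A, spectralRadius ℂ (T a) = spectralRadius ℂ a)
    (hcomm : ∀ x y : A, x * y = y * x) :
    ∀ x y : B, x * y = y * x :=
  commutative_of_spectral_isometry_general hA T hsurj hspec hcomm
end

section
/- Let B be a unital complex Banach algebra, S : B → B a unital surjective linear spectral isometry, and I a closed two-sided ideal of B such that the quotient B/I is semisimple. If r(Sy + I) = r(y + I) in B/I for all y ∈ B, then S(I) ⊆ I. -/
/-!
Write `I = ker π`, so that `C` is `B/I`. Since `S` is linear and surjective, for `x ∈ I` we get
`r(π(Sx) + π(Sz)) = r(π(x + z)) = r(π z) = r(π(Sz))`, so `a = π(Sx)` satisfies `r(a + c) = r(c)`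
for every `c ∈ C`. Such an `a` lies in the Jacobson radical (Zemánek), which is zero.

For Zemánek's criterion take a maximal left ideal `m ∌ a`. Either `u a ≡ 1 (mod m)` for some
`u ∈ m`; then for a unit `V = 1 + t u` the element `V a V⁻¹ - a` is quasinilpotent (the spectral
radius is invariant under conjugation) but congruent to the scalar `t ≠ 0`, so `m` contains a
unit. Or `m a ⊆ m`; then right multiplication by `a` is an endomorphism of the simple `A`-module
`A ⧸ m`, so by Schur's lemma and the nonemptiness of spectra it acts as a scalar `μ`, i.e.
`a ≡ μ (mod m)`, and `r(a) = 0` forces `μ = 0`.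
-/

open Filter Topology

namespace Submodule

variable {A : Type*} [Ring A] [TopologicalSpace A] [IsTopologicalRing A]

def mulRightQ (m : Submodule A A) (a : A) (ha : ∀ x ∈ m, x * a ∈ m) : (A ⧸ m) →L[A] (A ⧸ m) :=
  m.liftQL (m.mkQL ∘L ContinuousLinearMap.toSpanSingleton A a) fun x hx => by
    simpa [Quotient.mk_eq_zero] using ha x hx

@[simp]
theorem mulRightQ_mk (m : Submodule A A) (a : A) (ha : ∀ x ∈ m, x * a ∈ m) (x : A) :
    m.mulRightQ a ha (Quotient.mk x) = Quotient.mk (x * a) :=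
  rfl

end Submodule

theorem Ideal.IsMaximal.exists_mul_sub_one_mem_or {R : Type*} [Ring R] {m : Ideal R}
    (hm : m.IsMaximal) (a : R) : (∃ u ∈ m, u * a - 1 ∈ m) ∨ ∀ x ∈ m, x * a ∈ m := by
  refine or_iff_not_imp_right.mpr fun h => ?_
  push Not at h
  obtain ⟨x, hx, hxa⟩ := h
  obtain ⟨y, i, hi, hyi⟩ := hm.exists_inv hxa
  refine ⟨y * x, m.mul_mem_left y hx, ?_⟩
  rw [show y * x * a - 1 = -i by rw [← hyi]; noncomm_ring]
  exact m.neg_mem hi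

theorem units_mul_mul_inv_sub_sub_mem {𝕜 A : Type*} [CommRing 𝕜] [Ring A] [Algebra 𝕜 A]
    {m : Ideal A} {u a : A} (hu : u ∈ m) (hua : u * a - 1 ∈ m) (t : 𝕜) (V : Aˣ)
    (hV : (V : A) = 1 + t • u) : V * a * ↑V⁻¹ - a - algebraMap 𝕜 A t ∈ m := by
  have hinv : (↑V⁻¹ : A) - 1 ∈ m := by
    rw [show (↑V⁻¹ : A) - 1 = ↑V⁻¹ * -(t • u) by
      rw [eq_sub_of_add_eq' hV.symm, neg_sub, mul_sub, mul_one, V.inv_mul]]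
    exact m.mul_mem_left _ (m.neg_mem (m.smul_of_tower_mem t hu))
  have : (V : A) * a * ↑V⁻¹ - a - algebraMap 𝕜 A t
      = V * a * (↑V⁻¹ - 1) + t • (u * a - 1) := by
    rw [mul_sub, mul_one, hV, add_mul, one_mul, smul_mul_assoc, smul_sub,
      Algebra.algebraMap_eq_smul_one]
    abel
  rw [this]
  exact m.add_mem (m.mul_mem_left _ hinv) (m.smul_of_tower_mem t hua)

section SpectralRadius

variable {𝕜 A : Type*} [NormedField 𝕜] [Ring A] [Algebra 𝕜 A]

theorem isUnit_sub_algebraMap_of_spectralRadius_eq_zero {d : A}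
    (hd : spectralRadius 𝕜 d = 0) {t : 𝕜} (ht : t ≠ 0) : IsUnit (d - algebraMap 𝕜 A t) := by
  by_contra hnot
  have hmem : t ∈ spectrum 𝕜 d := by
    rw [spectrum.mem_iff, ← IsUnit.neg_iff, neg_sub]
    exact hnot
  have : (‖t‖₊ : ENNReal) ≤ 0 := hd ▸ le_iSup₂ (α := ENNReal) t hmem
  exact ht (by simpa using this)

theorem spectralRadius_units_conj_add {a : A}
    (h : ∀ c, spectralRadius 𝕜 (a + c) = spectralRadius 𝕜 c) (V : Aˣ) (c : A) :
    spectralRadius 𝕜 (V * a * ↑V⁻¹ + c) = spectralRadius 𝕜 c := by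
  have hconj : ∀ (W : Aˣ) (x : A), spectralRadius 𝕜 (W * x * ↑W⁻¹) = spectralRadius 𝕜 x :=
    fun W x => by simp only [spectralRadius, spectrum.units_conjugate]
  calc spectralRadius 𝕜 (V * a * ↑V⁻¹ + c)
      = spectralRadius 𝕜 (V * (a + ↑V⁻¹ * c * V) * ↑V⁻¹) := by
        simp [mul_add, add_mul, mul_assoc]
    _ = spectralRadius 𝕜 (↑V⁻¹ * c * V) := by rw [hconj, h]
    _ = spectralRadius 𝕜 c := by simpa using hconj V⁻¹ c

end SpectralRadius

theorem exists_ne_zero_isUnit_one_add_smul {𝕜 A : Type*} [NontriviallyNormedField 𝕜]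
    [NormedRing A] [NormedAlgebra 𝕜 A] [CompleteSpace A] (u : A) :
    ∃ t : 𝕜, t ≠ 0 ∧ IsUnit (1 + t • u) := by
  have hcont : Continuous fun t : 𝕜 => 1 + t • u := by fun_prop
  have hunit : ∀ᶠ t in 𝓝[≠] (0 : 𝕜), IsUnit (1 + t • u) :=
    nhdsWithin_le_nhds <| hcont.continuousAt.eventually <|
      Units.isOpen.mem_nhds (by simp)
  obtain ⟨t, ht, hne⟩ := (hunit.and self_mem_nhdsWithin).exists
  exact ⟨t, hne, ht⟩

section ComplexBanachAlgebra

variable {A : Type*} [NormedRing A] [NormedAlgebra ℂ A] [CompleteSpace A]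

theorem Ideal.IsMaximal.exists_sub_algebraMap_mem_s3 {m : Ideal A} (hm : m.IsMaximal) {a : A}
    (ha : ∀ x ∈ m, x * a ∈ m) : ∃ μ : ℂ, a - algebraMap ℂ A μ ∈ m := by
  have : IsClosed (m : Set A) := hm.isClosed
  have : IsSimpleModule A (A ⧸ m) := isSimpleModule_iff_isCoatom.mpr hm.out
  have := IsSimpleModule.nontrivial A (A ⧸ m)
  obtain ⟨μ, hμ⟩ := spectrum.nonempty ((m.mulRightQ a ha).restrictScalars ℂ)
  have hb : ∀ x ∈ m, x * (a - algebraMap ℂ A μ) ∈ m := fun x hx => by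
    rw [mul_sub, ← Algebra.commutes, ← Algebra.smul_def]
    exact m.sub_mem (ha x hx) (m.smul_of_tower_mem μ hx)
  refine ⟨μ, by_contra fun hnot => spectrum.mem_iff.mp hμ ?_⟩
  have hne : m.mulRightQ _ hb ≠ 0 := fun h => hnot <| by
    have := congr($h (Submodule.Quotient.mk 1))
    rwa [Submodule.mulRightQ_mk, one_mul, zero_apply, Submodule.Quotient.mk_eq_zero] at this
  have hbij := LinearMap.bijective_of_ne_zero (ContinuousLinearMap.coe_injective.ne_iff.mpr hne)
  rw [← IsUnit.neg_iff, neg_sub, ContinuousLinearMap.isUnit_iff_bijective]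
  convert hbij using 1
  ext x
  obtain ⟨x, rfl⟩ := Submodule.Quotient.mk_surjective m x
  simp [mul_sub, Algebra.algebraMap_eq_smul_one]

theorem mem_jacobsonRadical_of_forall_spectralRadius_add_eq_s3 {a : A}
    (h : ∀ c, spectralRadius ℂ (a + c) = spectralRadius ℂ c) : a ∈ jacobsonRadical A := by
  have hquasi : spectralRadius ℂ a = 0 := by simpa using h 0
  rw [jacobsonRadical, ← TwoSidedIdeal.mem_asIdeal, TwoSidedIdeal.asIdeal_jacobson]
  simp only [Ideal.jacobson, Ideal.mem_sInf]
  rintro m ⟨-, hm⟩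
  by_contra ha
  rcases hm.exists_mul_sub_one_mem_or a with ⟨u, hu, hua⟩ | hma
  · obtain ⟨t, ht, V, hV⟩ := exists_ne_zero_isUnit_one_add_smul (𝕜 := ℂ) u
    have hd : spectralRadius ℂ (V * a * ↑V⁻¹ - a) = 0 := by
      rw [sub_eq_add_neg, spectralRadius_units_conj_add h]
      simpa using (h (-a)).symm
    exact hm.ne_top (m.eq_top_of_isUnit_mem (units_mul_mul_inv_sub_sub_mem hu hua t V hV)
      (isUnit_sub_algebraMap_of_spectralRadius_eq_zero hd ht))
  · obtain ⟨μ, hμ⟩ := hm.exists_sub_algebraMap_mem_s3 hma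
    obtain rfl | hμ0 := eq_or_ne μ 0
    · exact ha (by simpa using hμ)
    · exact hm.ne_top (m.eq_top_of_isUnit_mem hμ
        (isUnit_sub_algebraMap_of_spectralRadius_eq_zero hquasi hμ0))

end ComplexBanachAlgebra

theorem spectral_isometry_preserves_ideal_general
    {B C : Type*} [NormedRing B] [NormedAlgebra ℂ B]
    [NormedRing C] [NormedAlgebra ℂ C] [CompleteSpace C]
    (S : B →ₗ[ℂ] B) (hSsurj : Function.Surjective S)
    (π : B →ₐ[ℂ] C) (hπsurj : Function.Surjective π)
    (hsemisimple : jacobsonRadical C = ⊥)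
    (hquot : ∀ y : B, spectralRadius ℂ (π (S y)) = spectralRadius ℂ (π y)) :
    ∀ x : B, π x = 0 → π (S x) = 0 := by
  intro x hx
  have hradical : ∀ c : C, spectralRadius ℂ (π (S x) + c) = spectralRadius ℂ c := by
    intro c
    obtain ⟨z, rfl⟩ := (hπsurj.comp hSsurj) c
    calc spectralRadius ℂ (π (S x) + π (S z))
        = spectralRadius ℂ (π (x + z)) := by rw [← map_add, ← map_add, hquot]
      _ = spectralRadius ℂ (π (S z)) := by rw [map_add, hx, zero_add, hquot]
  simpa [hsemisimple] using mem_jacobsonRadical_of_forall_spectralRadius_add_eq_s3 hradical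

/-- Let `S` be a unital surjective spectral isometry of a unital complex Banach algebra `B`
and let `I` be a closed two-sided ideal such that the quotient `B/I` is semisimple.
(The quotient is modelled by a surjective algebra homomorphism `π : B → C` onto a unital
complex Banach algebra `C` with closed kernel `I`.)  If `r(Sy + I) = r(y + I)` for all
`y ∈ B`, then `S(I) ⊆ I`. -/
theorem spectral_isometry_preserves_ideal
    {B C : Type*} [NormedRing B] [NormedAlgebra ℂ B] [CompleteSpace B]
    [NormedRing C] [NormedAlgebra ℂ C] [CompleteSpace C]
    (S : B →ₗ[ℂ] B) (hunital : S 1 = 1) (hSsurj : Function.Surjective S)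
    (hspec : ∀ y : B, spectralRadius ℂ (S y) = spectralRadius ℂ y)
    (π : B →ₐ[ℂ] C) (hπsurj : Function.Surjective π)
    (hclosed : IsClosed {x : B | π x = 0})
    (hsemisimple : jacobsonRadical C = ⊥)
    (hquot : ∀ y : B, spectralRadius ℂ (π (S y)) = spectralRadius ℂ (π y)) :
    ∀ x : B, π x = 0 → π (S x) = 0 :=
  spectral_isometry_preserves_ideal_general S hSsurj π hπsurj hsemisimple hquot
end

section
/- Let B be a unital complex Banach algebra, S : B → B a unital surjective linear spectral isometry, and I a closed two-sided ideal of B such that B/I is semisimple and r(Sy + I) = r(y + I) for all y ∈ B. Then S induces a well-defined unital surjective spectral isometry S^I : B/I → B/I satisfying S^I(y + I) = Sy + I for all y ∈ B. -/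
open scoped ENNReal
open Metric

theorem Complex.norm_inv_add_sub_inv_le {k : ℂ} {r t : ℝ} (hk : ‖k‖ ≤ r) (hrt : r < t) :
    ‖(k + t)⁻¹ - (t : ℂ)⁻¹‖ ≤ r / ((t - r) * t) := by
  have hr : 0 ≤ r := (norm_nonneg k).trans hk
  have ht : 0 < t := hr.trans_lt hrt
  have hkt : t - r ≤ ‖k + t‖ := by
    have := norm_sub_norm_le (t : ℂ) (-k)
    rw [Complex.norm_real, Real.norm_of_nonneg ht.le, norm_neg, sub_neg_eq_add, add_comm] at this
    linarith
  have hkt0 : k + t ≠ 0 := norm_pos_iff.mp ((sub_pos.mpr hrt).trans_le hkt)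
  have ht0 : (t : ℂ) ≠ 0 := Complex.ofReal_ne_zero.mpr ht.ne'
  rw [inv_sub_inv hkt0 ht0, sub_add_cancel_right, norm_div, norm_neg, norm_mul, Complex.norm_real,
    Real.norm_of_nonneg ht.le]
  gcongr

theorem LinearMap.exists_comp_eq_of_surjective_of_ker_le {R M N P : Type*} [Ring R]
    [AddCommGroup M] [AddCommGroup N] [AddCommGroup P] [Module R M] [Module R N] [Module R P]
    {f : M →ₗ[R] N} (hf : Function.Surjective f) (g : M →ₗ[R] P) (h : ker f ≤ ker g) :
    ∃ g' : N →ₗ[R] P, g' ∘ₗ f = g :=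
  ⟨(ker f).liftQ g h ∘ₗ (f.quotKerEquivOfSurjective hf).symm.toLinearMap, by
    ext x
    simp⟩

section SpectralRadiusAddLe

variable {A : Type*} [NormedRing A] [NormedAlgebra ℂ A]

theorem spectralRadius_sub_algebraMap_le {x : A} {z : ℂ} {s : ℝ}
    (hx : spectrum ℂ x ⊆ closedBall z s) :
    spectralRadius ℂ (x - algebraMap ℂ A z) ≤ ENNReal.ofReal s := by
  refine iSup₂_le fun k hk => ?_
  rw [← spectrum.sub_singleton_eq, Set.mem_sub] at hk
  obtain ⟨p, hp, _, rfl, rfl⟩ := hk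
  rw [← enorm_eq_nnnorm, ← ofReal_norm, ← dist_eq_norm]
  exact ENNReal.ofReal_le_ofReal (hx hp)

theorem spectrum_smul_subset_closedBall {x : A} {z : ℂ} {s : ℝ}
    (hx : spectrum ℂ x ⊆ closedBall z s) {c : ℂ} (hc : c ≠ 0) :
    spectrum ℂ (c • x) ⊆ closedBall (c • z) (‖c‖ * s) := by
  intro w hw
  rw [← Units.val_mk0 hc, ← Units.smul_def, spectrum.unit_smul_eq_smul,
    Set.mem_smul_set] at hw
  obtain ⟨p, hp, rfl⟩ := hw
  rw [mem_closedBall, Units.smul_def, Units.val_mk0, dist_smul₀]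
  exact mul_le_mul_of_nonneg_left (hx hp) (norm_nonneg c)

theorem isUnit_add_algebraMap_of_lt [CompleteSpace A] (b : A) {t : ℝ}
    (ht : ‖b‖ * ‖(1 : A)‖ < t) : IsUnit (b + algebraMap ℂ A t) := by
  have hmem : -(t : ℂ) ∉ spectrum ℂ b := fun h ↦ by
    have := spectrum.norm_le_norm_mul_of_mem h
    rw [norm_neg, Complex.norm_real, Real.norm_eq_abs] at this
    linarith [le_abs_self t]
  rw [spectrum.notMem_iff, map_neg, ← neg_add', IsUnit.neg_iff, add_comm] at hmem
  exact hmem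

theorem spectrum_inv_subset_closedBall [CompleteSpace A] {b : A} {t : ℝ}
    (ht : ‖b‖ * ‖(1 : A)‖ < t) (u : Aˣ) (hu : (u : A) = b + algebraMap ℂ A t) :
    spectrum ℂ (↑u⁻¹ : A) ⊆
      closedBall (t : ℂ)⁻¹ (‖b‖ * ‖(1 : A)‖ / ((t - ‖b‖ * ‖(1 : A)‖) * t)) := by
  intro w hw
  rw [← spectrum.map_inv, Set.mem_inv, hu, ← spectrum.add_singleton_eq, Set.mem_add] at hw
  obtain ⟨k, hk, _, rfl, hkw⟩ := hw
  rw [mem_closedBall, dist_eq_norm, ← inv_inv w, ← hkw]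
  exact Complex.norm_inv_add_sub_inv_le (spectrum.norm_le_norm_mul_of_mem hk) ht

variable {a : A} (ha : ∀ c : A, spectralRadius ℂ (a + c) ≤ spectralRadius ℂ c)
include ha

theorem isUnit_add_of_spectrum_subset_closedBall {x : A} {z : ℂ} {s : ℝ}
    (hx : spectrum ℂ x ⊆ closedBall z s) (hs₀ : 0 ≤ s) (hs : s < ‖z‖) : IsUnit (x + a) := by
  by_contra hxa
  have hmem : -z ∈ spectrum ℂ (a + (x - algebraMap ℂ A z)) := by
    rw [spectrum.mem_iff, map_neg, show -algebraMap ℂ A z - (a + (x - algebraMap ℂ A z)) =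
      -(x + a) by abel, IsUnit.neg_iff]
    exact hxa
  have hle : (‖-z‖₊ : ℝ≥0∞) ≤ ENNReal.ofReal s :=
    (le_iSup₂ (α := ℝ≥0∞) _ hmem).trans ((ha _).trans (spectralRadius_sub_algebraMap_le hx))
  rw [nnnorm_neg, ← enorm_eq_nnnorm, ← ofReal_norm, ENNReal.ofReal_le_ofReal_iff hs₀] at hle
  exact hs.not_ge hle

theorem spectrum_inv_mul_subset_zero (u : Aˣ) {z : ℂ} {s : ℝ}
    (hu : spectrum ℂ (u : A) ⊆ closedBall z s) (hs₀ : 0 ≤ s) (hs : s < ‖z‖) :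
    spectrum ℂ (↑u⁻¹ * a) ⊆ {0} := by
  intro μ hμ
  by_contra hμ0
  have hunit : IsUnit ((-μ) • (u : A) + a) := by
    refine isUnit_add_of_spectrum_subset_closedBall ha
      (spectrum_smul_subset_closedBall hu (neg_ne_zero.mpr hμ0))
      (mul_nonneg (norm_nonneg _) hs₀) ?_
    rw [norm_smul, norm_neg]
    exact mul_lt_mul_of_pos_left hs (norm_pos_iff.mpr hμ0)
  have heq : algebraMap ℂ A μ - ↑u⁻¹ * a = -(↑u⁻¹ * ((-μ) • (u : A) + a)) := by
    rw [mul_add, mul_smul_comm, Units.inv_mul, Algebra.algebraMap_eq_smul_one]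
    simp only [neg_smul]
    abel
  exact spectrum.mem_iff.mp hμ (heq ▸ (u⁻¹.isUnit.mul hunit).neg)

theorem isUnit_one_add_mul_of_spectralRadius_add_le [CompleteSpace A] (b : A) :
    IsUnit (1 + b * a) := by
  set r := ‖b‖ * ‖(1 : A)‖
  have hr : 0 ≤ r := by positivity
  set t : ℝ := 2 * r + 1
  have hrt : r < t := by linarith
  have ht : 0 < t := by positivity
  obtain ⟨u₁, hu₁⟩ := isUnit_add_algebraMap_of_lt b hrt
  have h₁ : spectrum ℂ (↑u₁ * a) ⊆ {0} := by
    simpa using spectrum_inv_mul_subset_zero ha u₁⁻¹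
      (spectrum_inv_subset_closedBall hrt u₁ hu₁) (by positivity) (by
        rw [norm_inv, Complex.norm_real, Real.norm_of_nonneg ht.le, div_lt_iff₀ (by positivity),
          mul_comm (t - r), ← mul_assoc, inv_mul_cancel₀ ht.ne', one_mul]
        linarith)
  have hσ₂ : spectrum ℂ (1 + ↑u₁ * a) ⊆ closedBall 1 0 := by
    rw [← map_one (algebraMap ℂ A), ← spectrum.singleton_add_eq, closedBall_zero]
    exact (Set.add_subset_add_left h₁).trans (by simp)
  obtain ⟨u₂, hu₂⟩ : IsUnit (1 + ↑u₁ * a) := by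
    rw [← spectrum.zero_notMem_iff ℂ]
    intro h0
    simpa using hσ₂ h0
  have h₂ : spectrum ℂ (↑u₂⁻¹ * a) ⊆ {0} :=
    spectrum_inv_mul_subset_zero ha u₂ (hu₂ ▸ hσ₂) le_rfl (by simp)
  have h₃ : IsUnit (1 - (t : ℂ) • (↑u₂⁻¹ * a)) := by
    refine spectrum.isUnit_one_sub_smul_of_lt_inv_radius ?_
    have : spectralRadius ℂ (↑u₂⁻¹ * a) = 0 :=
      nonpos_iff_eq_zero.mp (iSup₂_le fun k hk ↦ by simp [Set.mem_singleton_iff.mp (h₂ hk)])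
    simp [this]
  have hfactor : 1 + b * a = ↑u₂ * (1 - (t : ℂ) • (↑u₂⁻¹ * a)) := by
    rw [mul_sub, mul_one, mul_smul_comm, ← mul_assoc, Units.mul_inv, one_mul, hu₂, hu₁,
      Algebra.smul_def]
    noncomm_ring
  rw [hfactor]
  exact u₂.isUnit.mul h₃

theorem mem_jacobsonRadical_of_spectralRadius_add_le [CompleteSpace A] :
    a ∈ jacobsonRadical A := by
  rw [jacobsonRadical, TwoSidedIdeal.mem_jacobson_iff]
  intro b
  obtain ⟨u, hu⟩ := isUnit_one_add_mul_of_spectralRadius_add_le ha b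
  refine ⟨↑u⁻¹, ?_⟩
  rw [TwoSidedIdeal.mem_bot, mul_assoc, ← mul_add_one, add_comm (b * a), ← hu, Units.inv_mul,
    sub_self]

end SpectralRadiusAddLe

/-- The quotient `B/I` is modelled by a surjective algebra homomorphism `π : B → C` with kernel
`I`. -/
theorem spectral_isometry_induces_quotient_spectral_isometry_general
    {B C : Type*} [NormedRing B] [NormedAlgebra ℂ B]
    [NormedRing C] [NormedAlgebra ℂ C] [CompleteSpace C]
    (S : B →ₗ[ℂ] B) (hunital : S 1 = 1) (hSsurj : Function.Surjective S)
    (π : B →ₐ[ℂ] C) (hπsurj : Function.Surjective π)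
    (hsemisimple : jacobsonRadical C = ⊥)
    (hquot : ∀ y : B, spectralRadius ℂ (π (S y)) = spectralRadius ℂ (π y)) :
    ∃ S' : C →ₗ[ℂ] C, S' 1 = 1 ∧ Function.Surjective S' ∧
      (∀ c : C, spectralRadius ℂ (S' c) = spectralRadius ℂ c) ∧
      ∀ y : B, S' (π y) = π (S y) := by
  have hker : ∀ y, π y = 0 → π (S y) = 0 := by
    intro y hy
    have hle : ∀ c : C, spectralRadius ℂ (π (S y) + c) ≤ spectralRadius ℂ c := by
      intro c
      obtain ⟨z, rfl⟩ := hπsurj.comp hSsurj c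
      rw [Function.comp_apply, ← map_add, ← map_add, hquot, hquot, map_add, hy, zero_add]
    simpa [hsemisimple] using mem_jacobsonRadical_of_spectralRadius_add_le hle
  obtain ⟨S', hS'⟩ := LinearMap.exists_comp_eq_of_surjective_of_ker_le (f := π.toLinearMap)
    hπsurj (π.toLinearMap ∘ₗ S) hker
  have hS'π : ∀ y, S' (π y) = π (S y) := LinearMap.congr_fun hS'
  refine ⟨S', by simpa [hunital] using hS'π 1, fun c ↦ ?_, fun c ↦ ?_, hS'π⟩
  · obtain ⟨y, rfl⟩ := hπsurj.comp hSsurj c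
    exact ⟨π y, hS'π y⟩
  · obtain ⟨y, rfl⟩ := hπsurj c
    rw [hS'π, hquot]

/-- **Lemma 2.3.** Let `S` be a unital surjective spectral isometry of a unital complex
Banach algebra `B` and let `I` be a closed two-sided ideal such that the quotient `B/I` is
semisimple and `r(Sy + I) = r(y + I)` for all `y`.  (The quotient is modelled by a surjective
algebra homomorphism `π : B → C` with closed kernel `I`.)  Then `S` induces a unital
surjective spectral isometry `S^I` on the quotient with `S^I (y + I) = S y + I`. -/
theorem spectral_isometry_induces_quotient_spectral_isometry
    {B C : Type*} [NormedRing B] [NormedAlgebra ℂ B] [CompleteSpace B]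
    [NormedRing C] [NormedAlgebra ℂ C] [CompleteSpace C]
    (S : B →ₗ[ℂ] B) (hunital : S 1 = 1) (hSsurj : Function.Surjective S)
    (hspec : ∀ y : B, spectralRadius ℂ (S y) = spectralRadius ℂ y)
    (π : B →ₐ[ℂ] C) (hπsurj : Function.Surjective π)
    (hclosed : IsClosed {x : B | π x = 0})
    (hsemisimple : jacobsonRadical C = ⊥)
    (hquot : ∀ y : B, spectralRadius ℂ (π (S y)) = spectralRadius ℂ (π y)) :
    ∃ S' : C →ₗ[ℂ] C, S' 1 = 1 ∧ Function.Surjective S' ∧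
      (∀ c : C, spectralRadius ℂ (S' c) = spectralRadius ℂ c) ∧
      ∀ y : B, S' (π y) = π (S y) :=
  spectral_isometry_induces_quotient_spectral_isometry_general S hunital hSsurj π hπsurj hsemisimple
    hquot
end

section
/- Let A be a unital semisimple complex Banach algebra, B a unital complex Banach algebra, and T : A → B a surjective linear spectral isometry. Then T is bounded (continuous). -/
namespace SpectralIsometry

open Filter Metric Set Bornology
open scoped Topology ENNReal

section SpectralRadius

variable {E : Type*} [NormedRing E]

noncomputable def dyadicRoot (k : ℕ) (x : E) : ℝ := ‖x ^ 2 ^ k‖ ^ ((2 : ℝ) ^ k)⁻¹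

lemma dyadicRoot_succ_le (k : ℕ) (x : E) : dyadicRoot (k + 1) x ≤ dyadicRoot k x := by
  have hsq : ‖x ^ 2 ^ (k + 1)‖ ≤ ‖x ^ 2 ^ k‖ ^ 2 := by
    simpa [pow_succ, pow_mul, sq] using norm_mul_le (x ^ 2 ^ k) (x ^ 2 ^ k)
  calc dyadicRoot (k + 1) x ≤ (‖x ^ 2 ^ k‖ ^ 2) ^ ((2 : ℝ) ^ (k + 1))⁻¹ := by
        unfold dyadicRoot; gcongr
    _ = dyadicRoot k x := by
        rw [dyadicRoot, ← Real.rpow_natCast, ← Real.rpow_mul (norm_nonneg _)]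
        congr 1
        rw [pow_succ]
        field_simp
        norm_num

lemma antitone_dyadicRoot (x : E) : Antitone fun k => dyadicRoot k x :=
  antitone_nat_of_succ_le fun k => dyadicRoot_succ_le k x

lemma dyadicRoot_le_iff {k : ℕ} {x : E} {M : ℝ} (hM : 0 ≤ M) :
    dyadicRoot k x ≤ M ↔ ‖x ^ 2 ^ k‖ ≤ M ^ 2 ^ k := by
  rw [dyadicRoot, Real.rpow_inv_le_iff_of_pos (norm_nonneg _) hM (by positivity),
    ← Real.rpow_natCast M, Nat.cast_pow, Nat.cast_ofNat]

lemma continuous_dyadicRoot (k : ℕ) : Continuous (dyadicRoot k : E → ℝ) :=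
  (Real.continuous_rpow_const (by positivity)).comp (continuous_pow _).norm

variable [NormedAlgebra ℂ E]

/-- The spectral radius `r x` as a real number; `toReal` loses nothing by
`spectralRadius_ne_top`. -/
noncomputable def rho (x : E) : ℝ := (spectralRadius ℂ x).toReal

lemma rho_nonneg (x : E) : 0 ≤ rho x := ENNReal.toReal_nonneg

lemma rho_le_of_forall_mem {x : E} {R : ℝ} (hR : 0 ≤ R) (h : ∀ k ∈ spectrum ℂ x, ‖k‖ ≤ R) :
    rho x ≤ R := by
  refine ENNReal.toReal_le_of_le_ofReal hR (iSup₂_le fun k hk => ?_)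
  rw [← ENNReal.ofReal_coe_nnreal]
  exact ENNReal.ofReal_le_ofReal (h k hk)

variable [CompleteSpace E]

lemma spectralRadius_ne_top (x : E) : spectralRadius ℂ x ≠ ⊤ := by
  refine ne_top_of_le_ne_top (b := ENNReal.ofReal (‖x‖ * ‖(1 : E)‖)) ENNReal.ofReal_ne_top
    (iSup₂_le fun k hk => ?_)
  rw [← ENNReal.ofReal_coe_nnreal]
  exact ENNReal.ofReal_le_ofReal (spectrum.norm_le_norm_mul_of_mem hk)

lemma norm_le_rho_of_mem {x : E} {k : ℂ} (hk : k ∈ spectrum ℂ x) : ‖k‖ ≤ rho x := by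
  simpa [rho] using ENNReal.toReal_mono (spectralRadius_ne_top x)
    (le_iSup₂ (f := fun k _ => (‖k‖₊ : ℝ≥0∞)) k hk)

lemma rho_smul_le (z : ℂ) (x : E) : rho (z • x) ≤ ‖z‖ * rho x := by
  refine rho_le_of_forall_mem (by positivity [rho_nonneg x]) fun k hk => ?_
  rcases eq_or_ne z 0 with rfl | hz
  · simp only [zero_smul] at hk
    simpa [rho] using norm_le_rho_of_mem hk
  · rw [← Units.val_mk0 hz, ← Units.smul_def, spectrum.unit_smul_eq_smul] at hk
    obtain ⟨k, hk, rfl⟩ := hk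
    simpa [Units.smul_def, norm_mul] using
      mul_le_mul_of_nonneg_left (norm_le_rho_of_mem hk) (norm_nonneg z)

lemma tendsto_rho (x : E) :
    Tendsto (fun n : ℕ => ‖x ^ n‖ ^ (1 / n : ℝ)) atTop (𝓝 (rho x)) :=
  ((ENNReal.tendsto_toReal (spectralRadius_ne_top x)).comp
    (spectrum.pow_norm_pow_one_div_tendsto_nhds_spectralRadius x)).congr fun n =>
      ENNReal.toReal_ofReal (by positivity)

lemma tendsto_dyadicRoot (x : E) : Tendsto (fun k => dyadicRoot k x) atTop (𝓝 (rho x)) :=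
  ((tendsto_rho x).comp (tendsto_pow_atTop_atTop_of_one_lt one_lt_two)).congr fun k => by
    simp [dyadicRoot]

lemma rho_le_dyadicRoot (k : ℕ) (x : E) : rho x ≤ dyadicRoot k x :=
  (antitone_dyadicRoot x).le_of_tendsto (tendsto_dyadicRoot x) k

lemma rho_le_norm (x : E) : rho x ≤ ‖x‖ := by
  simpa [dyadicRoot] using rho_le_dyadicRoot 0 x

lemma upperSemicontinuous_rho : UpperSemicontinuous (rho : E → ℝ) := by
  intro x M hM
  obtain ⟨k, hk⟩ := ((tendsto_dyadicRoot x).eventually (gt_mem_nhds hM)).exists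
  filter_upwards [(continuous_dyadicRoot k).continuousAt.eventually (gt_mem_nhds hk)] with y hy
  exact (rho_le_dyadicRoot k y).trans_lt hy

lemma exists_dyadicRoot_lt_of_isCompact {K : Set E} (hK : IsCompact K) {M : ℝ}
    (hM : ∀ x ∈ K, rho x < M) : ∃ k, ∀ x ∈ K, dyadicRoot k x < M := by
  obtain ⟨k, hk⟩ := hK.elim_directed_cover (fun k => {x | dyadicRoot k x < M})
    (fun k => isOpen_lt (continuous_dyadicRoot k) continuous_const)
    (fun x hx => mem_iUnion.2 ((tendsto_dyadicRoot x).eventually (gt_mem_nhds (hM x hx))).exists)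
    (Monotone.directed_le fun _ _ hij _ hx => (antitone_dyadicRoot _ hij).trans_lt hx)
  exact ⟨k, hk⟩

theorem rho_le_of_forall_mem_frontier {U : Set ℂ} (hU : IsBounded U) {f : ℂ → E}
    (hf : DiffContOnCl ℂ f U) {M : ℝ} (hM : ∀ z ∈ frontier U, rho (f z) ≤ M) {z : ℂ}
    (hz : z ∈ closure U) : rho (f z) ≤ M := by
  obtain ⟨w, hw⟩ : (frontier U).Nonempty := nonempty_frontier_iff.2
    ⟨closure_nonempty_iff.1 ⟨z, hz⟩, fun h => NormedSpace.unbounded_univ ℝ ℂ (h ▸ hU)⟩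
  have hM0 : 0 ≤ M := (rho_nonneg _).trans (hM w hw)
  refine le_of_forall_pos_le_add fun ε hε => ?_
  have hK : IsCompact (f '' frontier U) :=
    (hU.isCompact_closure.of_isClosed_subset isClosed_frontier frontier_subset_closure)
      |>.image_of_continuousOn (hf.continuousOn.mono frontier_subset_closure)
  obtain ⟨k, hk⟩ := exists_dyadicRoot_lt_of_isCompact hK (M := M + ε)
    (forall_mem_image.2 fun w hw => (hM w hw).trans_lt (lt_add_of_pos_right M hε))
  have hpow : DiffContOnCl ℂ (fun z => f z ^ 2 ^ k) U :=
    (differentiable_pow (2 ^ k)).comp_diffContOnCl hf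
  refine (rho_le_dyadicRoot k (f z)).trans ((dyadicRoot_le_iff (by positivity)).2 ?_)
  refine Complex.norm_le_of_forall_mem_frontier_norm_le hU hpow (fun w hw => ?_) hz
  exact ((dyadicRoot_le_iff (by positivity)).1 (hk (f w) (mem_image_of_mem f hw)).le)

/-- Three circles for `rho ∘ f`: the weight `ζ⁻¹` combined with the substitution `ζ ↦ ζ ^ m`
plays the role of the non-holomorphic weight `ζ ^ (-1 / m)`. -/
theorem rho_le_max_of_forall_norm_eq_pow {f : ℂ → E} (hf : Differentiable ℂ f) (m : ℕ)
    {ρ₁ ρ₂ M₁ M₂ : ℝ} (hρ₁ : 0 < ρ₁) (hρ₁1 : ρ₁ < 1) (hρ₂ : 1 < ρ₂)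
    (h₁ : ∀ l : ℂ, ‖l‖ = ρ₁ ^ m → rho (f l) ≤ M₁)
    (h₂ : ∀ l : ℂ, ‖l‖ = ρ₂ ^ m → rho (f l) ≤ M₂) :
    rho (f 1) ≤ max (M₁ / ρ₁) (M₂ / ρ₂) := by
  set U : Set ℂ := norm ⁻¹' Ioo ρ₁ ρ₂
  have hUcl : closure U ⊆ norm ⁻¹' Icc ρ₁ ρ₂ :=
    closure_minimal (preimage_mono Ioo_subset_Icc_self) (isClosed_Icc.preimage continuous_norm)
  have hU : IsBounded U :=
    (isBounded_closedBall (x := (0 : ℂ)) (r := ρ₂)).subset fun ζ hζ => by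
      simpa using hζ.2.le
  have hF : DiffContOnCl ℂ (fun ζ => ζ⁻¹ • f (ζ ^ m)) U := by
    refine DifferentiableOn.diffContOnCl fun ζ hζ => ?_
    have hζ0 : ζ ≠ 0 := norm_pos_iff.1 (hρ₁.trans_le (hUcl hζ).1)
    exact ((differentiableAt_inv hζ0).smul
      (hf.comp (differentiable_pow m) ζ)).differentiableWithinAt
  have h1U : (1 : ℂ) ∈ U := by simp [U, hρ₁1, hρ₂]
  rw [show f 1 = (fun ζ : ℂ => ζ⁻¹ • f (ζ ^ m)) 1 by simp]
  refine rho_le_of_forall_mem_frontier hU hF (fun ζ hζ => ?_) (subset_closure h1U)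
  have hζ : ‖ζ‖ ∈ Icc ρ₁ ρ₂ \ Ioo ρ₁ ρ₂ :=
    ⟨hUcl (frontier_subset_closure hζ),
      ((isOpen_Ioo.preimage (continuous_norm (E := ℂ))).frontier_eq ▸ hζ).2⟩
  rw [Icc_sdiff_Ioo_same (hρ₁1.trans hρ₂).le] at hζ
  refine (rho_smul_le _ _).trans ?_
  rcases hζ with hζ | hζ
  · calc ‖ζ⁻¹‖ * rho (f (ζ ^ m)) ≤ ‖ζ⁻¹‖ * M₁ := by
          gcongr; exact h₁ _ (by rw [norm_pow, hζ])
      _ = M₁ / ρ₁ := by rw [norm_inv, hζ, inv_mul_eq_div]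
      _ ≤ _ := le_max_left _ _
  · calc ‖ζ⁻¹‖ * rho (f (ζ ^ m)) ≤ ‖ζ⁻¹‖ * M₂ := by
          gcongr; exact h₂ _ (by rw [norm_pow, mem_singleton_iff.1 hζ])
      _ = M₂ / ρ₂ := by rw [norm_inv, mem_singleton_iff.1 hζ, inv_mul_eq_div]
      _ ≤ _ := le_max_right _ _

end SpectralRadius

section Zemanek

variable {E : Type*} [NormedRing E] [NormedAlgebra ℂ E] [CompleteSpace E]

lemma isUnit_add_algebraMap {v : E} {l : ℂ} (hl : rho v < ‖l‖) :
    IsUnit (v + algebraMap ℂ E l) := by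
  have hl' : -l ∉ spectrum ℂ v := fun h => (norm_le_rho_of_mem h).not_gt (by simpa using hl)
  simpa [neg_sub_comm, add_comm] using (spectrum.notMem_iff.1 hl').neg

/-- `σ u⁻¹ = (l + σ v)⁻¹` lies in the disc around `l⁻¹` of radius
`rho v / ((‖l‖ - rho v) * ‖l‖) < ‖l⁻¹‖`. -/
lemma rho_inv_sub_lt {v : E} {l : ℂ} (hl : 2 * rho v < ‖l‖) (u : Eˣ)
    (hu : (u : E) = v + algebraMap ℂ E l) :
    rho ((↑u⁻¹ : E) - algebraMap ℂ E l⁻¹) < ‖l⁻¹‖ := by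
  have hv := rho_nonneg v
  have hl0 : 0 < ‖l‖ := by linarith
  set R := rho v / ((‖l‖ - rho v) * ‖l‖)
  have hR : R < ‖l⁻¹‖ := by
    rw [norm_inv, div_lt_iff₀ (by nlinarith)]
    field_simp
    linarith
  refine (rho_le_of_forall_mem (div_nonneg hv (by nlinarith)) fun ζ hζ => ?_).trans_lt hR
  rw [sub_eq_neg_add, ← spectrum.add_mem_iff] at hζ
  set p := ζ + l⁻¹
  have hp : p ≠ 0 := fun h => spectrum.zero_notMem ℂ u⁻¹.isUnit (h ▸ hζ)
  have hpu : p⁻¹ ∈ spectrum ℂ (u : E) := by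
    simpa using (spectrum.inv_mem_iff (r := (Units.mk0 p hp)⁻¹) (a := u)).2 (by simpa using hζ)
  rw [hu, add_comm, ← sub_add_cancel p⁻¹ l, spectrum.add_mem_add_iff] at hpu
  set z := p⁻¹ - l
  have hz : ‖z‖ ≤ rho v := norm_le_rho_of_mem hpu
  have hzl : ‖l‖ - rho v ≤ ‖z + l‖ := by
    rw [add_comm]; linarith [norm_sub_le_norm_add l z]
  have hzl0 : z + l ≠ 0 := by simp [z, hp]
  rw [show ζ = (z + l)⁻¹ - l⁻¹ by simp [z, p], inv_sub_inv hzl0 (by simpa using hl0),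
    norm_div, norm_mul, sub_add_cancel_right, norm_neg]
  gcongr
  nlinarith

variable {c : E} (hc : ∀ x, rho (x + c) ≤ rho x)
include hc

lemma isUnit_sub_smul {w : E} {β μ : ℂ} (hβ : rho (w - algebraMap ℂ E β) < ‖β‖)
    (hμ : μ ≠ 0) :
    IsUnit (c - μ • w) := by
  by_contra h
  have hmem : μ * β ∈ spectrum ℂ ((-μ) • (w - algebraMap ℂ E β) + c) := by
    have h0 := (spectrum.add_mem_add_iff (s := μ * β)).2 ((spectrum.zero_mem_iff ℂ).2 h)
    rw [zero_add] at h0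
    convert h0 using 2
    rw [map_mul, ← Algebra.smul_def]
    module
  have := calc ‖μ * β‖ ≤ rho ((-μ) • (w - algebraMap ℂ E β) + c) := norm_le_rho_of_mem hmem
    _ ≤ rho ((-μ) • (w - algebraMap ℂ E β)) := hc _
    _ ≤ ‖μ‖ * rho (w - algebraMap ℂ E β) :=
        (rho_smul_le (-μ) _).trans_eq (by rw [norm_neg])
    _ < ‖μ * β‖ := by rw [norm_mul]; exact mul_lt_mul_of_pos_left hβ (norm_pos_iff.2 hμ)
  exact lt_irrefl _ this

lemma rho_mul_eq_zero_of_rho_inv_sub_lt (u : Eˣ) {β : ℂ}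
    (hβ : rho ((↑u⁻¹ : E) - algebraMap ℂ E β) < ‖β‖) : rho (↑u * c) = 0 := by
  refine le_antisymm (rho_le_of_forall_mem le_rfl fun μ hμ => ?_) (rho_nonneg _)
  by_contra hμ0
  have hunit : IsUnit (algebraMap ℂ E μ - ↑u * c) := by
    have : algebraMap ℂ E μ - ↑u * c = -(↑u * (c - μ • ↑u⁻¹)) := by
      rw [mul_sub, mul_smul_comm, Units.mul_inv, Algebra.algebraMap_eq_smul_one]; abel
    rw [this]
    exact (u.isUnit.mul (isUnit_sub_smul hc hβ (by simpa using hμ0))).neg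
  exact hμ hunit

lemma rho_add_algebraMap_mul_eq_zero {v : E} {l : ℂ} (hl : 2 * rho v < ‖l‖) :
    rho ((v + algebraMap ℂ E l) * c) = 0 := by
  obtain ⟨u, hu⟩ := isUnit_add_algebraMap (by linarith [rho_nonneg v] : rho v < ‖l‖)
  rw [← hu]
  exact rho_mul_eq_zero_of_rho_inv_sub_lt hc u (rho_inv_sub_lt hl u hu)

lemma rho_mul_eq_zero (v : E) : rho (v * c) = 0 := by
  have hs : 0 < 2 * rho v + 1 := by positivity [rho_nonneg v]
  have hf : Differentiable ℂ fun l : ℂ => (v + algebraMap ℂ E l) * c := by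
    simp_rw [Algebra.algebraMap_eq_smul_one]; fun_prop
  have hsphere : ∀ l ∈ frontier (ball (0 : ℂ) (2 * rho v + 1)),
      rho ((v + algebraMap ℂ E l) * c) ≤ 0 := by
    intro l hl
    rw [frontier_ball 0 hs.ne', mem_sphere_zero_iff_norm] at hl
    exact (rho_add_algebraMap_mul_eq_zero hc (by linarith)).le
  refine le_antisymm ?_ (rho_nonneg _)
  simpa using rho_le_of_forall_mem_frontier isBounded_ball hf.diffContOnCl hsphere
    (subset_closure (mem_ball_self hs))

theorem mem_jacobsonRadical : c ∈ jacobsonRadical E := by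
  rw [jacobsonRadical, TwoSidedIdeal.mem_jacobson_iff]
  intro v
  have hunit : IsUnit (1 + v * c) := by
    have hnot : (-1 : ℂ) ∉ spectrum ℂ (v * c) := fun h => by
      have := norm_le_rho_of_mem h
      rw [rho_mul_eq_zero hc v] at this
      norm_num at this
    simpa [add_comm] using (spectrum.notMem_iff.1 hnot).neg
  refine ⟨↑hunit.unit⁻¹, ?_⟩
  rw [TwoSidedIdeal.mem_bot, mul_assoc, add_comm, ← mul_one_add,
    Units.inv_mul_of_eq hunit.unit_spec, sub_self]

end Zemanek

section ClosedGraph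

variable {A B : Type*} [NormedRing A] [NormedAlgebra ℂ A]
  [NormedRing B] [NormedAlgebra ℂ B] [CompleteSpace B]

lemma exists_eventually_rho_add_smul_le (T : A →ₗ[ℂ] B) (hT : ∀ a, rho (T a) = rho a)
    {a : ℕ → A} {c : A} (hTa : Tendsto (fun n => T (a n)) atTop (𝓝 (T c))) (x : A) {ε : ℝ}
    (hε : 0 < ε) :
    ∃ r > 0, ∀ᶠ n in atTop, ∀ l : ℂ, ‖l‖ ≤ r → rho (x + c + (l - 1) • a n) ≤ rho x + ε := by
  obtain ⟨δ, hδ, husc⟩ := Metric.eventually_nhds_iff.1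
    (upperSemicontinuous_rho (T x) (rho (T x) + ε) (lt_add_of_pos_right _ hε))
  set M := ‖T c‖ + 1
  have hM : 0 < M := by positivity
  refine ⟨δ / (2 * M), by positivity, ?_⟩
  have hdist : Tendsto (fun n => ‖T c - T (a n)‖) atTop (𝓝 0) := by
    simpa using ((tendsto_const_nhds (x := T c)).sub hTa).norm
  filter_upwards [hdist.eventually_lt_const (half_pos hδ),
    hTa.norm.eventually_lt_const (lt_add_one ‖T c‖)] with n hn hTn l hl
  have hTf : T (x + c + (l - 1) • a n) = T x + ((T c - T (a n)) + l • T (a n)) := by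
    rw [map_add, map_add, LinearMap.map_smul, sub_smul, one_smul]; abel
  rw [← hT, hTf, ← hT x]
  refine (husc ?_).le
  rw [dist_eq_norm, add_sub_cancel_left]
  calc ‖T c - T (a n) + l • T (a n)‖ ≤ ‖T c - T (a n)‖ + ‖l‖ * ‖T (a n)‖ :=
        (norm_add_le _ _).trans_eq (by rw [norm_smul])
    _ < δ / 2 + δ / (2 * M) * M :=
        add_lt_add_of_lt_of_le hn (mul_le_mul hl hTn.le (norm_nonneg _) (by positivity))
    _ = δ := by field_simp; ring

variable [CompleteSpace A]

lemma eventually_rho_add_smul_le {a : ℕ → A} (ha : Tendsto a atTop (𝓝 0)) (y : A) (R : ℝ) :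
    ∀ᶠ n in atTop, ∀ l : ℂ, ‖l‖ ≤ R → rho (y + (l - 1) • a n) ≤ ‖y‖ + 1 := by
  have hsmall : Tendsto (fun n => (R + 1) * ‖a n‖) atTop (𝓝 0) := by
    simpa using (tendsto_norm_zero.comp ha).const_mul (R + 1)
  filter_upwards [hsmall.eventually_le_const one_pos] with n hn l hl
  calc rho (y + (l - 1) • a n) ≤ ‖y‖ + ‖l - 1‖ * ‖a n‖ :=
        (rho_le_norm _).trans ((norm_add_le _ _).trans_eq (by rw [norm_smul]))
    _ ≤ ‖y‖ + (R + 1) * ‖a n‖ := by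
        gcongr; exact (norm_sub_le l 1).trans (by simpa using hl)
    _ ≤ ‖y‖ + 1 := by linarith

theorem rho_add_le_of_tendsto (T : A →ₗ[ℂ] B) (hT : ∀ a, rho (T a) = rho a)
    {a : ℕ → A} {c : A} (ha : Tendsto a atTop (𝓝 0))
    (hTa : Tendsto (fun n => T (a n)) atTop (𝓝 (T c))) (x : A) : rho (x + c) ≤ rho x := by
  refine le_of_forall_pos_le_add fun ε hε => ?_
  obtain ⟨r, hr, hinner⟩ := exists_eventually_rho_add_smul_le T hT hTa x hε
  have hC : 0 < rho x + ε := by positivity [rho_nonneg x]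
  suffices h : ∀ ρ₁ ∈ Ioo (0 : ℝ) 1, rho (x + c) ≤ (rho x + ε) / ρ₁ by
    have hlim : Tendsto (fun ρ₁ : ℝ => (rho x + ε) / ρ₁) (𝓝[<] 1) (𝓝 (rho x + ε)) := by
      have : ContinuousAt (fun ρ₁ : ℝ => (rho x + ε) / ρ₁) 1 :=
        continuousAt_const.div continuousAt_id one_ne_zero
      simpa using this.tendsto.mono_left nhdsWithin_le_nhds
    exact ge_of_tendsto hlim (by
      filter_upwards [Ioo_mem_nhdsLT zero_lt_one] with ρ₁ hρ₁ using h ρ₁ hρ₁)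
  rintro ρ₁ ⟨h0, h1⟩
  obtain ⟨m, hm⟩ := exists_pow_lt_of_lt_one hr h1
  obtain ⟨ρ₂, hρ₂, hρ₂C⟩ := ((eventually_gt_atTop 1).and
    ((tendsto_const_nhds.div_atTop tendsto_id).eventually_le_const
      (div_pos hC h0) (f := fun ρ : ℝ => (‖x + c‖ + 1) / ρ))).exists
  obtain ⟨n, hn₁, hn₂⟩ := (hinner.and (eventually_rho_add_smul_le ha (x + c) (ρ₂ ^ m))).exists
  have hf : Differentiable ℂ fun l : ℂ => x + c + (l - 1) • a n :=
    (differentiable_const _).add ((differentiable_id.sub_const 1).smul_const (a n))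
  calc rho (x + c) = rho (x + c + ((1 : ℂ) - 1) • a n) := by rw [sub_self, zero_smul, add_zero]
    _ ≤ max ((rho x + ε) / ρ₁) ((‖x + c‖ + 1) / ρ₂) :=
        rho_le_max_of_forall_norm_eq_pow hf m h0 h1 hρ₂
          (fun l hl => hn₁ l (hl.trans_lt hm).le) (fun l hl => hn₂ l hl.le)
    _ = (rho x + ε) / ρ₁ := max_eq_left hρ₂C

end ClosedGraph

end SpectralIsometry

open SpectralIsometry

/-- A surjective linear spectral isometry from a unital semisimple complex Banach algebra
onto a unital complex Banach algebra is automatically continuous. -/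
theorem spectral_isometry_continuous
    {A B : Type*} [NormedRing A] [NormedAlgebra ℂ A] [CompleteSpace A]
    [NormedRing B] [NormedAlgebra ℂ B] [CompleteSpace B]
    (hA : jacobsonRadical A = ⊥)
    (T : A →ₗ[ℂ] B) (hsurj : Function.Surjective T)
    (hspec : ∀ a : A, spectralRadius ℂ (T a) = spectralRadius ℂ a) :
    Continuous T := by
  refine T.continuous_of_seq_closed_graph fun u x y hu hTu => ?_
  obtain ⟨c, hc⟩ := hsurj (y - T x)
  have hT : ∀ a, rho (T a) = rho a := fun a => congrArg ENNReal.toReal (hspec a)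
  have hrad : c ∈ jacobsonRadical A :=
    mem_jacobsonRadical (rho_add_le_of_tendsto T hT (a := fun n => u n - x)
      (by simpa using hu.sub_const x) (by simpa [hc] using hTu.sub_const (T x)))
  rw [hA, TwoSidedIdeal.mem_bot] at hrad
  rw [← sub_eq_zero, ← hc, hrad, map_zero]
end
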